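/- arXiv:1101.4831 — 5 statements merged into one kernel-verified Lean document; each statement's English description precedes it below -/
import Mathlib

section
/- Let m \geq 1 and p be natural numbers, let d_0, \ldots, d_p be natural numbers, let \beta_0, \ldots, \beta_p be rational numbers, and let P(z) \in \mathbb{Q}[z] be a polynomial such that (1-z)^m \cdot P(z) = \sum_{i=0}^{p} (-1)^i \beta_i z^{d_i}. Then \sum_{i=0}^{p} (-1)^i \beta_i = 0, and for each j = 1, \ldots, m-1 one has \sum_{i=0}^{p} (-1)^i \beta_i \, d_i (d_i - 1) \cdots (d_i - j + 1) = 0. -/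
open Polynomial Finset

lemma cast_descFactorial_prod (n j : ℕ) :
    (n.descFactorial j : ℚ) = ∏ k ∈ Finset.range j, ((n : ℚ) - (k : ℚ)) := by
  rcases le_or_gt j n with h | h
  · rw [Nat.descFactorial_eq_prod_range, Nat.cast_prod]
    refine Finset.prod_congr rfl fun i hi => ?_
    rw [Nat.cast_sub (le_trans (Nat.le_of_lt_succ (Nat.lt_succ_of_lt (Finset.mem_range.mp hi))) h)]
  · rw [Nat.descFactorial_eq_zero_iff_lt.mpr h, Nat.cast_zero]
    exact (Finset.prod_eq_zero (Finset.mem_range.mpr h) (by simp)).symm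

lemma deriv_pow_dvd (m : ℕ) (P : Polynomial ℚ) :
    ∀ j, j ≤ m → ∃ S : Polynomial ℚ,
      Polynomial.derivative^[j] ((1 - Polynomial.X) ^ m * P) = (1 - Polynomial.X) ^ (m - j) * S := by
  intro j
  induction j with
  | zero => intro _; exact ⟨P, by simp⟩
  | succ j ih =>
    intro hj
    obtain ⟨S, hS⟩ := ih (Nat.le_of_succ_le hj)
    obtain ⟨k, hk⟩ : ∃ k, m - j = k + 1 :=
      ⟨m - (j + 1), by omega⟩
    refine ⟨-((k : ℚ[X]) + 1) * S + (1 - Polynomial.X) * Polynomial.derivative S, ?_⟩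
    rw [Function.iterate_succ_apply', hS, hk, show m - (j + 1) = k by omega]
    rw [derivative_mul, derivative_pow, derivative_sub, derivative_one, derivative_X]
    simp only [map_add, map_one, map_natCast, Nat.add_sub_cancel_left]
    push_cast
    ring

/-- Generalized Herzog–Kühl equations (falling-factorial form).  If
`(1-z)^m * P(z) = ∑_{i=0}^{p} (-1)^i β_i z^{d_i}` with `m ≥ 1`, then
`∑ (-1)^i β_i = 0` and, for each `j = 1, …, m-1`,
`∑ (-1)^i β_i · d_i (d_i - 1) ⋯ (d_i - j + 1) = 0`. -/
theorem herzog_kuhl_falling_factorial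
    (m p : ℕ) (hm : 1 ≤ m) (d : ℕ → ℕ) (β : ℕ → ℚ) (P : Polynomial ℚ)
    (hP : (1 - Polynomial.X) ^ m * P =
      ∑ i ∈ Finset.range (p + 1), Polynomial.C ((-1) ^ i * β i) * Polynomial.X ^ (d i)) :
    (∑ i ∈ Finset.range (p + 1), (-1) ^ i * β i = 0) ∧
      ∀ j, 1 ≤ j → j ≤ m - 1 →
        ∑ i ∈ Finset.range (p + 1),
          (-1) ^ i * β i * ∏ k ∈ Finset.range j, ((d i : ℚ) - (k : ℚ)) = 0 := by
  have key : ∀ j, j ≤ m - 1 →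
      ∑ i ∈ Finset.range (p + 1),
        (-1) ^ i * β i * ∏ k ∈ Finset.range j, ((d i : ℚ) - (k : ℚ)) = 0 := by
    intro j hj
    obtain ⟨S, hS⟩ := deriv_pow_dvd m P j (le_trans hj (Nat.sub_le m 1))
    have hL : (Polynomial.derivative^[j] ((1 - Polynomial.X) ^ m * P)).eval 1 = 0 := by
      rw [hS, eval_mul, eval_pow, eval_sub, eval_one, eval_X, sub_self,
        zero_pow (by omega), zero_mul]
    rw [hP, Polynomial.iterate_derivative_sum] at hL
    rw [eval_finset_sum] at hL
    rw [← hL]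
    refine Finset.sum_congr rfl fun i _ => ?_
    rw [Polynomial.iterate_derivative_C_mul, Polynomial.iterate_derivative_X_pow_eq_C_mul,
      eval_mul, eval_C, eval_mul, eval_C, eval_pow, eval_X, one_pow, mul_one,
      cast_descFactorial_prod]
  constructor
  · have h0 := key 0 (Nat.zero_le _)
    simpa using h0
  · intro j hj1 hj2
    exact key j hj2
end

section
/- Let m \geq 1 and p be natural numbers, let d_0, \ldots, d_p be natural numbers, let \beta_0, \ldots, \beta_p be rational numbers, and let P(z) \in \mathbb{Q}[z] be a polynomial such that (1-z)^m \cdot P(z) = \sum_{i=0}^{p} (-1)^i \beta_i z^{d_i}. Then for each j = 0, 1, \ldots, m-1 one has \sum_{i=0}^{p} (-1)^i \beta_i \, d_i^{\,j} = 0 (with the convention d_i^0 = 1). -/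
open Polynomial Finset

private noncomputable def opD (f : Polynomial ℚ) : Polynomial ℚ := X * derivative f

private lemma opD_monomial (c : ℚ) (n : ℕ) :
    opD (C c * X ^ n) = C (c * n) * X ^ n := by
  unfold opD
  rw [derivative_C_mul_X_pow]
  cases n with
  | zero => simp
  | succ k => push_cast [Nat.succ_sub_one]; ring

private lemma opD_iter_sum (p : ℕ) (c : ℕ → ℚ) (d : ℕ → ℕ) (j : ℕ) :
    opD^[j] (∑ i ∈ range (p+1), C (c i) * X ^ (d i)) =
      ∑ i ∈ range (p+1), C (c i * (d i : ℚ) ^ j) * X ^ (d i) := by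
  induction j with
  | zero => simp
  | succ k ih =>
    rw [Function.iterate_succ_apply', ih]
    unfold opD
    rw [derivative_sum, Finset.mul_sum]
    refine Finset.sum_congr rfl fun i _ => ?_
    have h := opD_monomial (c i * (d i : ℚ) ^ k) (d i)
    unfold opD at h
    rw [h, mul_assoc, ← pow_succ]

private lemma opD_div (k : ℕ) (Q : Polynomial ℚ) :
    ∃ R, opD ((1 - X) ^ (k+1) * Q) = (1 - X) ^ k * R := by
  refine ⟨X * (C (-(k+1 : ℚ)) * Q + (1 - X) * derivative Q), ?_⟩
  unfold opD
  rw [derivative_mul, derivative_pow]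
  simp only [derivative_sub, derivative_one, derivative_X, Nat.add_sub_cancel, map_neg,
    map_add, map_one, map_natCast, Nat.cast_add, Nat.cast_one]
  ring

/-- Generalized Herzog–Kühl equations (power-sum form).  If
`(1-z)^m * P(z) = ∑_{i=0}^{p} (-1)^i β_i z^{d_i}` with `m ≥ 1`, then for each
`j = 0, 1, …, m-1` one has `∑_{i=0}^{p} (-1)^i β_i d_i^j = 0`. -/
theorem herzog_kuhl_power_sums
    (m p : ℕ) (hm : 1 ≤ m) (d : ℕ → ℕ) (β : ℕ → ℚ) (P : Polynomial ℚ)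
    (hP : (1 - Polynomial.X) ^ m * P =
      ∑ i ∈ Finset.range (p + 1), Polynomial.C ((-1) ^ i * β i) * Polynomial.X ^ (d i)) :
    ∀ j < m, ∑ i ∈ Finset.range (p + 1), (-1) ^ i * β i * (d i : ℚ) ^ j = 0 := by
  have key : ∀ j ≤ m, ∃ R, opD^[j] ((1 - X) ^ m * P) = (1 - X) ^ (m - j) * R := by
    intro j hj
    induction j with
    | zero => exact ⟨P, by simp⟩
    | succ k ih =>
      obtain ⟨R, hR⟩ := ih (Nat.le_of_succ_le hj)
      have hmk : m - k = (m - (k+1)) + 1 := by omega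
      rw [hmk] at hR
      obtain ⟨R', hR'⟩ := opD_div (m - (k+1)) R
      exact ⟨R', by rw [Function.iterate_succ_apply', hR, hR']⟩
  intro j hj
  obtain ⟨R, hR⟩ := key j (le_of_lt hj)
  rw [hP, opD_iter_sum] at hR
  have := congrArg (eval 1) hR
  simp only [eval_finset_sum, eval_mul, eval_pow, eval_C, eval_X, one_pow, mul_one,
    eval_sub, eval_one, sub_self] at this
  rw [zero_pow (by omega : m - j ≠ 0), zero_mul] at this
  calc ∑ i ∈ Finset.range (p + 1), (-1) ^ i * β i * (d i : ℚ) ^ j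
      = ∑ i ∈ Finset.range (p + 1), (-1 : ℚ) ^ i * β i * (d i : ℚ) ^ j := rfl
    _ = 0 := this
end

section
/- Let m \geq 1 and p be natural numbers, let d_0, \ldots, d_p be natural numbers, let \beta_0, \ldots, \beta_p be rational numbers, and let P(z) \in \mathbb{Q}[z] be a polynomial such that (1-z)^m \cdot P(z) = \sum_{i=0}^{p} (-1)^i \beta_i z^{d_i}. Then P(1) = (-1)^m \sum_{i=0}^{p} (-1)^i \beta_i \binom{d_i}{m}. -/
open Polynomial Finset

private lemma aux_iter_deriv (m : ℕ) (P : Polynomial ℚ) :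
    Polynomial.eval 1 (Polynomial.derivative^[m] ((1 - Polynomial.X) ^ m * P)) =
      (-1) ^ m * m.factorial * P.eval 1 := by
  induction m generalizing P with
  | zero => simp
  | succ m ih =>
    have hder : Polynomial.derivative ((1 - Polynomial.X) ^ (m + 1) * P) =
        (1 - Polynomial.X) ^ m *
          ((-((m : Polynomial ℚ) + 1)) * P + (1 - Polynomial.X) * Polynomial.derivative P) := by
      rw [Polynomial.derivative_mul, Polynomial.derivative_pow]
      simp only [Polynomial.derivative_sub, Polynomial.derivative_one, Polynomial.derivative_X]
      simp only [map_add, map_one, Polynomial.C_eq_natCast]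
      push_cast
      ring
    rw [Function.iterate_succ_apply, hder, ih]
    simp only [Polynomial.eval_add, Polynomial.eval_mul, Polynomial.eval_sub, Polynomial.eval_one,
      Polynomial.eval_X, Polynomial.eval_neg, Polynomial.eval_natCast, Nat.factorial_succ]
    push_cast
    ring

/-- Multiplicity formula.  If `(1-z)^m * P(z) = ∑_{i=0}^{p} (-1)^i β_i z^{d_i}`
with `m ≥ 1`, then `P(1) = (-1)^m ∑_{i=0}^{p} (-1)^i β_i (d_i choose m)`. -/
theorem multiplicity_eval_one_eq_alternating_sum_choose
    (m p : ℕ) (hm : 1 ≤ m) (d : ℕ → ℕ) (β : ℕ → ℚ) (P : Polynomial ℚ)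
    (hP : (1 - Polynomial.X) ^ m * P =
      ∑ i ∈ Finset.range (p + 1), Polynomial.C ((-1) ^ i * β i) * Polynomial.X ^ (d i)) :
    P.eval 1 =
      (-1) ^ m * ∑ i ∈ Finset.range (p + 1), (-1) ^ i * β i * ((d i).choose m : ℚ) := by
  have key := aux_iter_deriv m P
  rw [hP] at key
  have hrhs : Polynomial.eval 1 (Polynomial.derivative^[m]
      (∑ i ∈ Finset.range (p + 1), Polynomial.C ((-1) ^ i * β i) * Polynomial.X ^ (d i))) =
      (m.factorial : ℚ) * ∑ i ∈ Finset.range (p + 1), (-1) ^ i * β i * ((d i).choose m : ℚ) := by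
    rw [Polynomial.iterate_derivative_sum m (Finset.range (p + 1))
      (fun i => Polynomial.C ((-1) ^ i * β i) * Polynomial.X ^ (d i)),
      Polynomial.eval_finset_sum, Finset.mul_sum]
    refine Finset.sum_congr rfl fun i _ => ?_
    rw [Polynomial.iterate_derivative_C_mul, Polynomial.iterate_derivative_X_pow_eq_smul]
    simp [Nat.descFactorial_eq_factorial_mul_choose]
    ring
  rw [hrhs] at key
  have hfac : (m.factorial : ℚ) ≠ 0 := by positivity
  have hsign : ((-1 : ℚ) ^ m) ≠ 0 := by positivity
  have h2 : ((-1 : ℚ) ^ m) * ((-1 : ℚ) ^ m) = 1 := by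
    rw [← pow_add]; simp [pow_mul']
  have : ((-1 : ℚ) ^ m) * ((-1 : ℚ) ^ m * (m.factorial : ℚ) * P.eval 1) =
      ((-1 : ℚ) ^ m) * ((m.factorial : ℚ) * ∑ i ∈ Finset.range (p + 1),
        (-1) ^ i * β i * ((d i).choose m : ℚ)) := by rw [key]
  rw [← mul_assoc, ← mul_assoc, h2, one_mul] at this
  have h3 : (m.factorial : ℚ) * P.eval 1 = (m.factorial : ℚ) *
      ((-1) ^ m * ∑ i ∈ Finset.range (p + 1), (-1) ^ i * β i * ((d i).choose m : ℚ)) := by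
    linear_combination this
  exact mul_left_cancel₀ hfac h3
end

section
/- Let n and g be natural numbers with g + 2 \leq n. Let \beta_0, \ldots, \beta_g and f_{-1}, f_0, \ldots, f_{n-1} be rational numbers satisfying, for every j with 0 \leq j \leq n, the relation f_{j-1} = \binom{n}{j} + \sum_{i=0}^{j-2} (-1)^{i+1} \binom{n-2-i}{n-j} \beta_i (where the sum is empty if j < 2). Then for each i with 0 \leq i \leq g one has \beta_i = \sum_{j=1}^{i+1} (-1)^j f_{j} \binom{n - j - 1}{i - j + 1} + (i+1) \binom{n}{i+2}. -/
open Finset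

/-!
Substituting the hypothesis for `f j`, the right-hand side splits into a part free of `β`,
which collapses to `-(i + 1) * C(n, i + 2)` via `C(n, j + 1) * C(n - j - 1, i + 1 - j) =
C(n, i + 2) * C(i + 2, j + 1)` and an alternating row sum of Pascal's triangle, and a triangular
double sum in `β`. There `C(n - 2 - k, n - j - 1) * C(n - j - 1, i + 1 - j) =
C(n - 2 - k, n - i - 2) * C(i - k, i + 1 - j)`, so after exchanging the sums the inner sum over `j`
is the alternating sum of row `i - k`, which vanishes unless `k = i`.
-/

theorem choose_mul_choose_eq_of_lt {n i j k : ℕ} (hkj : k < j) (hji : j ≤ i + 1)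
    (hin : i + 2 ≤ n) :
    (n - 2 - k).choose (n - j - 1) * (n - j - 1).choose (i + 1 - j) =
      (n - 2 - k).choose (n - i - 2) * (i - k).choose (i + 1 - j) := by
  rw [Nat.choose_symm_of_eq_add (show n - j - 1 = (i + 1 - j) + (n - i - 2) by omega),
    Nat.choose_mul (by omega)]
  congr 2 <;> omega

section
variable {R : Type*} [CommRing R]

theorem sum_range_neg_one_pow_mul_choose (m : ℕ) :
    ∑ s ∈ range (m + 1), (-1 : R) ^ s * m.choose s = if m = 0 then 1 else 0 := by
  have := congrArg (Int.cast : ℤ → R) (Int.alternating_sum_range_choose (n := m))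
  push_cast at this
  simpa [apply_ite (Int.cast : ℤ → R)] using this

theorem sum_Icc_neg_one_pow_mul_choose_add_one (m : ℕ) :
    ∑ j ∈ Icc 1 (m + 1), (-1 : R) ^ j * (m + 2).choose (j + 1) = -(m + 1) := by
  have hsum := sum_range_neg_one_pow_mul_choose (R := R) (m + 2)
  rw [if_neg (by omega), sum_range_succ', sum_range_succ'] at hsum
  simp only [zero_add, Nat.choose_zero_right, Nat.choose_one_right] at hsum
  push_cast at hsum
  rw [← Ico_add_one_right_eq_Icc, sum_Ico_eq_sum_range, Nat.add_sub_cancel]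
  have hshift : ∑ j ∈ range (m + 1), (-1 : R) ^ (1 + j) * (m + 2).choose (1 + j + 1) =
      -∑ j ∈ range (m + 1), (-1 : R) ^ (j + 1 + 1) * (m + 2).choose (j + 1 + 1) := by
    rw [← sum_neg_distrib]
    refine sum_congr rfl fun j _ => ?_
    rw [add_comm 1 j, pow_succ _ (j + 1)]
    ring
  rw [hshift]
  linear_combination -hsum

theorem sum_Ioc_neg_one_pow_mul_choose {k i : ℕ} (hki : k ≤ i) :
    ∑ j ∈ Ioc k (i + 1), (-1 : R) ^ (j + k + 1) * (i - k).choose (i + 1 - j) =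
      if k = i then 1 else 0 := by
  rw [← Ico_add_one_add_one_eq_Ioc, sum_Ico_eq_sum_range,
    show i + 1 + 1 - (k + 1) = i - k + 1 by omega]
  convert sum_range_neg_one_pow_mul_choose (R := R) (i - k) using 1
  · refine sum_congr rfl fun s hs => ?_
    rw [mem_range] at hs
    rw [show i + 1 - (k + 1 + s) = i - k - s by omega, Nat.choose_symm (by omega),
      show k + 1 + s + k + 1 = s + 2 * (k + 1) by omega, pow_add, pow_mul]
    simp
  · congr 1
    simp only [eq_iff_iff]
    omega

theorem sum_Icc_neg_one_pow_mul_choose_mul_choose (n i : ℕ) :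
    ∑ j ∈ Icc 1 (i + 1), (-1 : R) ^ j * n.choose (j + 1) * (n - j - 1).choose (i + 1 - j) =
      -((i + 1) * n.choose (i + 2)) := by
  have hterm : ∀ j ∈ Icc 1 (i + 1),
      (-1 : R) ^ j * n.choose (j + 1) * (n - j - 1).choose (i + 1 - j) =
        n.choose (i + 2) * ((-1) ^ j * (i + 2).choose (j + 1)) := by
    intro j hj
    have h := Nat.choose_mul (n := n) (show j + 1 ≤ i + 2 by grind)
    rw [show n - (j + 1) = n - j - 1 by omega, show i + 2 - (j + 1) = i + 1 - j by omega] at h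
    rw [mul_assoc, ← Nat.cast_mul, ← h]
    push_cast
    ring
  rw [sum_congr rfl hterm, ← mul_sum, sum_Icc_neg_one_pow_mul_choose_add_one]
  ring

theorem sum_Icc_neg_one_pow_mul_sum_range_choose {n i : ℕ} (hin : i + 2 ≤ n) (β : ℕ → R) :
    ∑ j ∈ Icc 1 (i + 1), (-1 : R) ^ j *
        (∑ k ∈ range j, (-1) ^ (k + 1) * (n - 2 - k).choose (n - j - 1) * β k) *
        (n - j - 1).choose (i + 1 - j) = β i := by
  calc _ = ∑ j ∈ Icc 1 (i + 1), ∑ k ∈ range j, (-1 : R) ^ (j + k + 1) *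
          (n - 2 - k).choose (n - i - 2) * (i - k).choose (i + 1 - j) * β k := by
        refine sum_congr rfl fun j hj => ?_
        rw [mul_sum, sum_mul]
        refine sum_congr rfl fun k hk => ?_
        rw [mem_Icc] at hj
        rw [mem_range] at hk
        have h := congrArg (Nat.cast : ℕ → R) (choose_mul_choose_eq_of_lt hk hj.2 hin)
        push_cast at h
        linear_combination (-1 : R) ^ (j + k + 1) * β k * h
    _ = ∑ k ∈ range (i + 1), ∑ j ∈ Ioc k (i + 1), (-1 : R) ^ (j + k + 1) *
          (n - 2 - k).choose (n - i - 2) * (i - k).choose (i + 1 - j) * β k :=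
        sum_comm' fun j k => by simp only [mem_Icc, mem_range, mem_Ioc]; omega
    _ = ∑ k ∈ range (i + 1),
          (n - 2 - k).choose (n - i - 2) * β k * if k = i then 1 else 0 := by
        refine sum_congr rfl fun k hk => ?_
        rw [← sum_Ioc_neg_one_pow_mul_choose (mem_range_succ_iff.1 hk), mul_sum]
        exact sum_congr rfl fun j _ => by ring
    _ = β i := by simp [show n - 2 - i = n - i - 2 by omega]
end

/-- Betti numbers of the edge ideal of a graph (`2`-uniform hypergraph) with
`2`-linear resolution, in terms of the `f`-vector of the independence complex.
Here `f (j - 1)` plays the role of `f_{j-1}` (the number of `(j-1)`-dimensional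
faces). -/
theorem betti_of_linear_resolution_graph
    (n g : ℕ) (hg : g + 2 ≤ n)
    (β : ℕ → ℚ) (f : ℤ → ℚ)
    (hf : ∀ j : ℕ, j ≤ n →
      f ((j : ℤ) - 1) = (n.choose j : ℚ) +
        ∑ i ∈ Finset.range (j + 1 - 2),
          (-1) ^ (i + 1) * ((n - 2 - i).choose (n - j) : ℚ) * β i) :
    ∀ i ≤ g,
      β i = (∑ j ∈ Finset.Icc 1 (i + 1),
          (-1) ^ j * f (j : ℤ) * ((n - j - 1).choose (i + 1 - j) : ℚ)) +
        ((i : ℚ) + 1) * (n.choose (i + 2) : ℚ) := by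
  intro i hi
  have hin : i + 2 ≤ n := by omega
  have hterm : ∀ j ∈ Icc 1 (i + 1),
      (-1 : ℚ) ^ j * f j * (n - j - 1).choose (i + 1 - j) =
        (-1) ^ j * n.choose (j + 1) * (n - j - 1).choose (i + 1 - j) +
        (-1) ^ j * (∑ k ∈ range j, (-1) ^ (k + 1) * (n - 2 - k).choose (n - j - 1) * β k) *
          (n - j - 1).choose (i + 1 - j) := by
    intro j hj
    have hfj := hf (j + 1) (by grind)
    rw [Nat.cast_add, Nat.cast_one, add_sub_cancel_right, show j + 1 + 1 - 2 = j by omega,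
      show n - (j + 1) = n - j - 1 by omega] at hfj
    rw [hfj]
    ring
  rw [sum_congr rfl hterm, sum_add_distrib, sum_Icc_neg_one_pow_mul_choose_mul_choose,
    sum_Icc_neg_one_pow_mul_sum_range_choose hin]
  ring
end

section
/- For all natural numbers n, m \geq 1 and every natural number i, the following identity of integers holds: \sum_{\substack{j + l = i + 2 \\ j, l \geq 1}} \binom{n}{j} \binom{m}{l} = \sum_{j=1}^{i+1} (-1)^j \left( \binom{n}{j+1} + \binom{m}{j+1} \right) \binom{n + m - j - 1}{i - j + 1} + (i+1) \binom{n+m}{i+2}. -/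
/-!
Removing the two edge terms `(0, i + 2)` and `(i + 2, 0)` from Vandermonde's convolution shows
that the left side is `C(n+m, i+2) - C(n, i+2) - C(m, i+2)`. On the right, after the shift
`j ↦ j + 1`, each of the two alternating sums is, up to sign, the alternating convolution
`∑ⱼ (-1)ʲ C(a, j) C(a+b-j, k-j) = C(b, k)` (the coefficient of `xᵏ` in
`((1 + x) - x)ᵃ (1 + x)ᵇ`) without its first two terms `C(a+b, k)` and `-a C(a+b-1, k-1)`.
Since `(n + m) C(n+m-1, i+1) = (i + 2) C(n+m, i+2)`, these first-order terms combine with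
`(i + 1) C(n+m, i+2)` and everything cancels.
-/

open Finset

theorem alternating_sum_choose_mul_choose_add_sub (a b k : ℕ) :
    ∑ j ∈ range (k + 1), (-1 : ℤ) ^ j * a.choose j * (a + b - j).choose (k - j) =
      b.choose k := by
  induction a generalizing b k with
  | zero =>
    rw [sum_range_succ']
    simp
  | succ a ih =>
    cases k with
    | zero => simp
    | succ k =>
      -- Pascal's rule splits the sum into the instances `(b, k)` and `(b + 1, k + 1)`.
      have hpascal : ∀ j ∈ range (k + 1),
          (-1 : ℤ) ^ (j + 1) * (a + 1).choose (j + 1) *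
              (a + 1 + b - (j + 1)).choose (k + 1 - (j + 1)) =
            -((-1) ^ j * a.choose j * (a + b - j).choose (k - j)) +
              (-1) ^ (j + 1) * a.choose (j + 1) *
                (a + 1 + b - (j + 1)).choose (k + 1 - (j + 1)) := by
        intro j _
        rw [Nat.choose_succ_succ', show a + 1 + b - (j + 1) = a + b - j by omega,
          Nat.add_sub_add_right]
        push_cast
        ring
      have hb := ih (b + 1) (k + 1)
      rw [show a + (b + 1) = a + 1 + b by omega, sum_range_succ', Nat.choose_succ_succ' b k] at hb
      rw [sum_range_succ', sum_congr rfl hpascal, sum_add_distrib, sum_neg_distrib, ih b k]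
      push_cast [Nat.choose_zero_right] at hb ⊢
      linear_combination hb

theorem sum_Icc_neg_one_pow_mul_choose_succ_mul_choose (a b i : ℕ) :
    ∑ j ∈ Icc 1 (i + 1),
        (-1 : ℤ) ^ j * a.choose (j + 1) * (a + b - j - 1).choose (i + 1 - j) =
      (a + b).choose (i + 2) - a * (a + b - 1).choose (i + 1) - b.choose (i + 2) := by
  have h := alternating_sum_choose_mul_choose_add_sub a b (i + 2)
  rw [sum_range_succ', sum_range_succ'] at h
  have hshift : ∑ j ∈ Icc 1 (i + 1),
      (-1 : ℤ) ^ j * a.choose (j + 1) * (a + b - j - 1).choose (i + 1 - j) =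
        -∑ j ∈ range (i + 1), (-1 : ℤ) ^ (j + 1 + 1) * a.choose (j + 1 + 1) *
          (a + b - (j + 1 + 1)).choose (i + 2 - (j + 1 + 1)) := by
    rw [← Ico_add_one_right_eq_Icc, sum_Ico_eq_sum_range, ← sum_neg_distrib, Nat.add_sub_cancel]
    refine sum_congr rfl fun j _ => ?_
    rw [show a + b - (1 + j) - 1 = a + b - (j + 1 + 1) by omega,
      show i + 1 - (1 + j) = i + 2 - (j + 1 + 1) by omega, add_comm 1 j, pow_succ]
    ring
  rw [hshift]
  simp only [pow_zero, pow_one, Nat.choose_zero_right, Nat.choose_one_right, Nat.sub_zero,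
    Nat.cast_one, zero_add, show i + 2 - 1 = i + 1 from rfl] at h
  linear_combination -h

theorem Nat.mul_choose_sub_one_eq (n k : ℕ) :
    n * (n - 1).choose k = n.choose (k + 1) * (k + 1) := by
  cases n with
  | zero => simp
  | succ n => exact Nat.add_one_mul_choose_eq n k

theorem sum_antidiagonal_filter_pos_choose_mul_choose (n m : ℕ) {k : ℕ} (hk : k ≠ 0) :
    ∑ q ∈ (antidiagonal k).filter (fun q => 1 ≤ q.1 ∧ 1 ≤ q.2),
        (n.choose q.1 : ℤ) * m.choose q.2 =
      (n + m).choose k - n.choose k - m.choose k := by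
  have hedges :
      (antidiagonal k).filter (fun q => ¬(1 ≤ q.1 ∧ 1 ≤ q.2)) = {(0, k), (k, 0)} := by
    ext ⟨x, y⟩
    simp only [mem_filter, HasAntidiagonal.mem_antidiagonal, mem_insert, mem_singleton,
      Prod.mk.injEq]
    omega
  have hvandermonde :
      ∑ q ∈ antidiagonal k, (n.choose q.1 : ℤ) * m.choose q.2 = (n + m).choose k := by
    rw [Nat.add_choose_eq]
    push_cast
    rfl
  have hsplit := sum_filter_add_sum_filter_not (antidiagonal k) (fun q => 1 ≤ q.1 ∧ 1 ≤ q.2)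
    (fun q => (n.choose q.1 : ℤ) * m.choose q.2)
  rw [hedges, sum_pair (by simp [Ne.symm hk]), hvandermonde] at hsplit
  simp only [Nat.choose_zero_right, Nat.cast_one, one_mul, mul_one] at hsplit
  linear_combination hsplit

theorem betti_complete_bipartite_formula_general (n m i : ℕ) :
    ∑ q ∈ (Finset.HasAntidiagonal.antidiagonal (i + 2)).filter (fun q => 1 ≤ q.1 ∧ 1 ≤ q.2),
        (n.choose q.1 : ℤ) * (m.choose q.2 : ℤ) =
      (∑ j ∈ Finset.Icc 1 (i + 1), (-1 : ℤ) ^ j *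
          ((n.choose (j + 1) : ℤ) + (m.choose (j + 1) : ℤ)) *
          ((n + m - j - 1).choose (i + 1 - j) : ℤ)) +
        ((i : ℤ) + 1) * ((n + m).choose (i + 2) : ℤ) := by
  have hsplit : ∑ j ∈ Icc 1 (i + 1), (-1 : ℤ) ^ j *
        ((n.choose (j + 1) : ℤ) + m.choose (j + 1)) * (n + m - j - 1).choose (i + 1 - j) =
      ∑ j ∈ Icc 1 (i + 1),
          (-1 : ℤ) ^ j * n.choose (j + 1) * (n + m - j - 1).choose (i + 1 - j) +
        ∑ j ∈ Icc 1 (i + 1),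
          (-1 : ℤ) ^ j * m.choose (j + 1) * (m + n - j - 1).choose (i + 1 - j) := by
    rw [← sum_add_distrib, add_comm m n]
    exact sum_congr rfl fun j _ => by ring
  have habsorb := congrArg (Nat.cast : ℕ → ℤ) (Nat.mul_choose_sub_one_eq (n + m) (i + 1))
  push_cast at habsorb
  rw [sum_antidiagonal_filter_pos_choose_mul_choose n m (by omega), hsplit,
    sum_Icc_neg_one_pow_mul_choose_succ_mul_choose,
    sum_Icc_neg_one_pow_mul_choose_succ_mul_choose, add_comm m n]
  linear_combination habsorb

/-- The two formulas for the `i`-th total Betti number of the edge ideal of the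
complete bipartite graph `K_{n,m}` agree:
`∑_{j+l=i+2, j,l ≥ 1} (n choose j)(m choose l)` equals
`∑_{j=1}^{i+1} (-1)^j ((n choose j+1) + (m choose j+1)) (n+m-j-1 choose i-j+1)
  + (i+1) (n+m choose i+2)`. -/
theorem betti_complete_bipartite_formula (n m i : ℕ) (hn : 1 ≤ n) (hm : 1 ≤ m) :
    ∑ q ∈ (Finset.HasAntidiagonal.antidiagonal (i + 2)).filter (fun q => 1 ≤ q.1 ∧ 1 ≤ q.2),
        (n.choose q.1 : ℤ) * (m.choose q.2 : ℤ) =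
      (∑ j ∈ Finset.Icc 1 (i + 1), (-1 : ℤ) ^ j *
          ((n.choose (j + 1) : ℤ) + (m.choose (j + 1) : ℤ)) *
          ((n + m - j - 1).choose (i + 1 - j) : ℤ)) +
        ((i : ℤ) + 1) * ((n + m).choose (i + 2) : ℤ) :=
  betti_complete_bipartite_formula_general n m i
end
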